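/- One-to-one recovery of separators (Proposition): Let S and S' be open connected subsets of ℝ^d and h : S → S' a smooth diffeomorphism. Let 𝒢 be a finite set of axis-separators of S with union G = ⋃_{H ∈ 𝒢} H, and let 𝒢' be a finite set of axis-separators of S' with union G' = ⋃_{H' ∈ 𝒢'} H'. If h(G) = G', then {h(H) : H ∈ 𝒢} = 𝒢', and the map H ↦ h(H) is a bijection from 𝒢 onto 𝒢'. -/

import Mathlib

open Set MeasureTheory Topology

noncomputable section

abbrev Euc (d : ℕ) := EuclideanSpace ℝ (Fin d)

/-- Axis separator: points of `S` whose `i`-th coordinate equals `τ`. -/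
def Gamma {d : ℕ} (S : Set (Euc d)) (i : Fin d) (τ : ℝ) : Set (Euc d) :=
  {z | z ∈ S ∧ z i = τ}

/-- Positive half: points of `S` whose `i`-th coordinate is greater than `τ`. -/
def GammaPos {d : ℕ} (S : Set (Euc d)) (i : Fin d) (τ : ℝ) : Set (Euc d) :=
  {z | z ∈ S ∧ τ < z i}

/-- Negative half: points of `S` whose `i`-th coordinate is less than `τ`. -/
def GammaNeg {d : ℕ} (S : Set (Euc d)) (i : Fin d) (τ : ℝ) : Set (Euc d) :=
  {z | z ∈ S ∧ z i < τ}

/-- `Γ_S(i,τ)` is an axis-separator of `S`: it is nonempty and connected, and both of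
its halves are nonempty and connected. (`IsConnected` includes nonemptiness.) -/
def IsAxisSeparator {d : ℕ} (S : Set (Euc d)) (i : Fin d) (τ : ℝ) : Prop :=
  IsConnected (Gamma S i τ) ∧ IsConnected (GammaPos S i τ) ∧ IsConnected (GammaNeg S i τ)

/-- A smooth diffeomorphism from `S` onto `S'` with explicit inverse `hinv`. -/
structure IsSmoothDiffeoOn {d : ℕ} (h hinv : Euc d → Euc d) (S S' : Set (Euc d)) : Prop where
  mapsTo : Set.MapsTo h S S'
  mapsTo_inv : Set.MapsTo hinv S' S
  left_inv : ∀ z ∈ S, hinv (h z) = z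
  right_inv : ∀ z' ∈ S', h (hinv z') = z'
  smooth : ContDiffOn ℝ (⊤ : ℕ∞) h S
  smooth_inv : ContDiffOn ℝ (⊤ : ℕ∞) hinv S'

/-- A discrete coordination on `S`: for each axis `i`, a strictly increasing nonempty tuple
of thresholds, each giving an axis-separator of `S`. -/
structure DiscreteCoordination {d : ℕ} (S : Set (Euc d)) where
  n : Fin d → ℕ
  n_pos : ∀ i, 0 < n i
  A : (i : Fin d) → Fin (n i) → ℝ
  mono : ∀ i, StrictMono (A i)
  sep : ∀ i k, IsAxisSeparator S i (A i k)

/-- The grid of a discrete coordination: the union of all its axis-separators. -/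
def DiscreteCoordination.grid {d : ℕ} {S : Set (Euc d)} (C : DiscreteCoordination S) :
    Set (Euc d) :=
  ⋃ (i : Fin d), ⋃ (k : Fin (C.n i)), Gamma S i (C.A i k)

/-- The parallel-separator-set along axis `i`. -/
def DiscreteCoordination.axisSet {d : ℕ} {S : Set (Euc d)} (C : DiscreteCoordination S)
    (i : Fin d) : Set (Set (Euc d)) :=
  {H | ∃ k : Fin (C.n i), H = Gamma S i (C.A i k)}

/-- The axis-separator set of a discrete coordination. -/
def DiscreteCoordination.sepSet {d : ℕ} {S : Set (Euc d)} (C : DiscreteCoordination S) :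
    Set (Set (Euc d)) :=
  {H | ∃ (i : Fin d) (k : Fin (C.n i)), H = Gamma S i (C.A i k)}

/-- A backbone: a choice of one separator per axis such that they all meet in a single
point and each of them meets every separator of the grid lying on a different axis. -/
def DiscreteCoordination.HasBackbone {d : ℕ} {S : Set (Euc d)}
    (C : DiscreteCoordination S) : Prop :=
  ∃ kstar : (i : Fin d) → Fin (C.n i),
    (∃ z : Euc d, (⋂ (i : Fin d), Gamma S i (C.A i (kstar i))) = {z}) ∧
    ∀ (i j : Fin d), j ≠ i → ∀ k : Fin (C.n j),
      (Gamma S i (C.A i (kstar i)) ∩ Gamma S j (C.A j k)).Nonempty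

/-- Quantization: `Q(x;T) = Σ_k 1[x ≥ T_k]`. -/
def Q {K : ℕ} (x : ℝ) (T : Fin K → ℝ) : ℕ :=
  (Finset.univ.filter fun k : Fin K => T k ≤ x).card

/-- Quantization with order reversal: `Q⁻(x;T) = Σ_k 1[x ≤ T_k]`. -/
def Qneg {K : ℕ} (x : ℝ) (T : Fin K → ℝ) : ℕ :=
  (Finset.univ.filter fun k : Fin K => x ≤ T k).card

/-- Signed quantization: `Q^{+1} = Q` and `Q^{-1} = Q⁻`. -/
def Qsgn {K : ℕ} (s : ℤ) (x : ℝ) (T : Fin K → ℝ) : ℕ :=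
  if s = 1 then Q x T else Qneg x T

/-- `μ` (absolutely continuous w.r.t. Lebesgue) has a non-removable discontinuity at `z`
if every measurable density of `μ` w.r.t. Lebesgue measure is discontinuous at `z`. -/
def HasNonRemovableDiscont {d : ℕ} (μ : Measure (Euc d)) (z : Euc d) : Prop :=
  ∀ q : Euc d → ENNReal, Measurable q → μ = volume.withDensity q → ¬ ContinuousAt q z

/-- `T` has exactly two connected components, namely `Cp` and `Cm`. -/
def TwoComponents {d : ℕ} (T Cp Cm : Set (Euc d)) : Prop :=
  Cp ≠ Cm ∧
  (∃ x ∈ T, connectedComponentIn T x = Cp) ∧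
  (∃ x ∈ T, connectedComponentIn T x = Cm) ∧
  ∀ x ∈ T, connectedComponentIn T x = Cp ∨ connectedComponentIn T x = Cm

/-- The intersection set of a finite family of separators: points lying on at least two
distinct members. -/
def interSet {d M : ℕ} (H : Fin M → Set (Euc d)) : Set (Euc d) :=
  ⋃ (m : Fin M), ⋃ (m' : Fin M), ⋃ (_ : m ≠ m'), H m ∩ H m'

/-!
A separator `Γ = Γ_S(i,τ)` is a connected piece of a coordinate hyperplane. Suppose `h` maps it
into finitely many coordinate hyperplanes `{u_j = c}`. By Baire, the points of `Γ` near which some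
`h_j` is constant along `Γ` are dense; at such a point `Dh` maps `{v_i = 0}` into `{u_j = 0}`, and
as `Dh` is injective this happens for at most one `j`. These closed conditions partition the
connected `Γ`, so one `j` serves everywhere; then `h_j` takes finitely many values on `Γ` and is
constant. Applied to `h` and `h⁻¹` this gives `H ⊆ h⁻¹(H') ⊆ H₂` with `H, H₂ ∈ 𝒢`, `H' ∈ 𝒢'`, and
nested separators of an open set coincide, so `h(H) = H'`.
-/

open Function Filter

theorem ConnectedSpace.exists_eq_univ_of_pairwise_disjoint_isClosed {X κ : Type*}
    [TopologicalSpace X] [ConnectedSpace X] [Finite κ] {E : κ → Set X}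
    (hE : ∀ l, IsClosed (E l)) (hdisj : Pairwise (Disjoint on E)) (hcov : ⋃ l, E l = univ) :
    ∃ l, E l = univ := by
  obtain ⟨x₀⟩ := ‹ConnectedSpace X›.toNonempty
  obtain ⟨l, hx₀⟩ := mem_iUnion.1 (hcov ▸ mem_univ x₀)
  have hcompl : (E l)ᶜ = ⋃ (l' : κ) (_ : l' ≠ l), E l' := by
    ext x
    obtain ⟨l', hx⟩ := mem_iUnion.1 (hcov ▸ mem_univ x)
    simp only [mem_compl_iff, mem_iUnion, exists_prop]
    refine ⟨fun hxl => ⟨l', fun h => hxl (h ▸ hx), hx⟩, ?_⟩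
    rintro ⟨l'', hne, hx''⟩ hxl
    exact (hdisj hne).notMem_of_mem_left hx'' hxl
  have hopen : IsOpen (E l) := by
    rw [← isClosed_compl_iff, hcompl]
    exact isClosed_iUnion_of_finite fun l' => isClosed_iUnion_of_finite fun _ => hE l'
  exact ⟨l, (isClopen_iff.1 ⟨hE l, hopen⟩).resolve_left (ne_of_mem_of_not_mem' hx₀ id)⟩

theorem exists_biUnion_eq_univ_of_interior_subset {X ι κ : Type*} [TopologicalSpace X]
    [ConnectedSpace X] [BaireSpace X] [Finite ι] [Finite κ] {F : ι → Set X} {E : κ → Set X}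
    {j : ι → κ} (hF : ∀ k, IsClosed (F k)) (hFcov : ⋃ k, F k = univ) (hE : ∀ l, IsClosed (E l))
    (hdisj : Pairwise (Disjoint on E)) (hFE : ∀ k, interior (F k) ⊆ E (j k)) :
    ∃ l, ⋃ (k) (_ : j k = l), F k = univ := by
  have hdense : Dense (⋃ k, interior (F k)) := dense_iUnion_interior_of_closed hF hFcov
  have hEcov : ⋃ l, E l = univ := by
    refine eq_univ_of_univ_subset (hdense.closure_eq ▸ closure_minimal ?_ ?_)
    · exact iUnion_subset fun k => (hFE k).trans (subset_iUnion E (j k))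
    · exact isClosed_iUnion_of_finite hE
  obtain ⟨l, hl⟩ := ConnectedSpace.exists_eq_univ_of_pairwise_disjoint_isClosed hE hdisj hEcov
  refine ⟨l, eq_univ_of_univ_subset (hdense.closure_eq ▸ closure_minimal ?_ ?_)⟩
  · refine iUnion_subset fun k x hx => ?_
    have hjk : j k = l := by
      by_contra hne
      exact (hdisj hne).notMem_of_mem_left (hFE k hx) (hl ▸ mem_univ x)
    exact mem_iUnion₂.2 ⟨k, hjk, interior_subset hx⟩
  · exact isClosed_iUnion_of_finite fun k => isClosed_iUnion_of_finite fun _ => hF k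

theorem LinearMap.map_ker_eq_of_le {K V : Type*} [Field K] [AddCommGroup V] [Module K V]
    [FiniteDimensional K V] {A : V →ₗ[K] V} (hA : Injective A) {f g : Module.Dual K V}
    (hf : f ≠ 0) (hg : g ≠ 0) (hfg : (ker f).map A ≤ ker g) : (ker f).map A = ker g := by
  refine Submodule.eq_of_le_of_finrank_eq hfg ?_
  have hmap := (Submodule.equivMapOfInjective A hA (ker f)).finrank_eq
  have := f.finrank_ker_add_one_of_ne_zero hf
  have := g.finrank_ker_add_one_of_ne_zero hg
  omega

theorem EuclideanSpace.eq_of_forall_coord_eq_zero {d : ℕ} {A : Euc d →ₗ[ℝ] Euc d}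
    (hA : Injective A) {i j k : Fin d} (hj : ∀ v : Euc d, v i = 0 → A v j = 0)
    (hk : ∀ v : Euc d, v i = 0 → A v k = 0) : j = k := by
  have proj_ne_zero : ∀ l : Fin d, EuclideanSpace.projₗ (𝕜 := ℝ) l ≠ 0 := fun l h => by
    simpa using LinearMap.congr_fun h (EuclideanSpace.single l 1)
  have map_eq : ∀ l, (∀ v : Euc d, v i = 0 → A v l = 0) →
      (LinearMap.ker (EuclideanSpace.projₗ i)).map A = LinearMap.ker (EuclideanSpace.projₗ l) :=
    fun l hl => LinearMap.map_ker_eq_of_le hA (proj_ne_zero i) (proj_ne_zero l) <| by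
      rintro _ ⟨v, hv, rfl⟩
      exact hl v hv
  have hker := (map_eq j hj).symm.trans (map_eq k hk)
  by_contra hjk
  have : EuclideanSpace.single k (1 : ℝ) ∈ LinearMap.ker (EuclideanSpace.projₗ (𝕜 := ℝ) j) := by
    simp [Ne.symm hjk]
  rw [hker] at this
  simp at this

theorem Gamma_subset {d : ℕ} (S : Set (Euc d)) (i : Fin d) (τ : ℝ) : Gamma S i τ ⊆ S :=
  fun _ hz => hz.1

theorem isLocallyClosed_Gamma {d : ℕ} {S : Set (Euc d)} (hS : IsOpen S) (i : Fin d) (τ : ℝ) :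
    IsLocallyClosed (Gamma S i τ) :=
  hS.isLocallyClosed.inter (isClosed_eq (EuclideanSpace.proj i).continuous
    continuous_const).isLocallyClosed

theorem Gamma_eq_of_subset {d : ℕ} {S : Set (Euc d)} (hS : IsOpen S) {i i' : Fin d}
    {τ τ' : ℝ} (hne : (Gamma S i τ).Nonempty) (hsub : Gamma S i τ ⊆ Gamma S i' τ') :
    Gamma S i τ = Gamma S i' τ' := by
  obtain ⟨z, hz⟩ := hne
  have hzτ' : z i' = τ' := (hsub hz).2
  obtain rfl : i = i' := by
    by_contra hii'
    obtain ⟨ρ, hρ, hball⟩ := Metric.isOpen_iff.1 hS z hz.1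
    let w : Euc d := z + EuclideanSpace.single i' (ρ / 2)
    have hw : w ∈ Gamma S i τ := by
      refine ⟨hball ?_, by simp [w, hz.2, hii']⟩
      rw [Metric.mem_ball, dist_eq_norm, add_sub_cancel_left, PiLp.norm_single,
        Real.norm_of_nonneg (by positivity)]
      linarith
    have := (hsub hw).2
    simp only [w, PiLp.add_apply, PiLp.single_apply, if_pos, hzτ'] at this
    linarith
  rw [← hz.2, hzτ']

theorem fderiv_apply_eq_zero_of_eventually_eq_on_Gamma {d : ℕ} {S : Set (Euc d)} (hS : IsOpen S)
    {h : Euc d → Euc d} {i j : Fin d} {τ c : ℝ} {z : Euc d} (hz : z ∈ Gamma S i τ)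
    (hh : DifferentiableAt ℝ h z) (hloc : ∀ᶠ y in 𝓝[Gamma S i τ] z, h y j = c)
    {v : Euc d} (hv : v i = 0) : fderiv ℝ h z v j = 0 := by
  have hline : HasDerivAt (fun t : ℝ => z + t • v) v 0 := by
    simpa using ((hasDerivAt_id (0 : ℝ)).smul_const v).const_add z
  have hderiv : HasDerivAt (fun t : ℝ => h (z + t • v) j) (fderiv ℝ h z v j) 0 := by
    have := hh.hasFDerivAt.comp_hasDerivAt_of_eq 0 hline (by simp)
    exact (EuclideanSpace.proj (𝕜 := ℝ) j).hasFDerivAt.comp_hasDerivAt 0 this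
  have hline_tendsto : Tendsto (fun t : ℝ => z + t • v) (𝓝 0) (𝓝[Gamma S i τ] z) := by
    refine tendsto_nhdsWithin_iff.2 ⟨by simpa using hline.continuousAt.tendsto, ?_⟩
    filter_upwards [hline.continuousAt.preimage_mem_nhds (by simpa using hS.mem_nhds hz.1)]
      with t ht
    exact ⟨ht, by simp [hv, hz.2]⟩
  have hconst : (fun t : ℝ => h (z + t • v) j) =ᶠ[𝓝 0] fun _ => c :=
    hline_tendsto.eventually hloc
  exact hderiv.unique ((hasDerivAt_const 0 c).congr_of_eventuallyEq hconst)

theorem exists_coord_mapsTo_image_of_forall_exists_coord_eq {d : ℕ} {S : Set (Euc d)}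
    (hS : IsOpen S) {h : Euc d → Euc d} (hh : ContDiffOn ℝ 1 h S)
    (hinj : ∀ z ∈ S, Injective (fderiv ℝ h z)) {i : Fin d} {τ : ℝ}
    (hconn : IsConnected (Gamma S i τ)) {ι : Type*} [Finite ι] (j : ι → Fin d) (c : ι → ℝ)
    (hcov : ∀ z ∈ Gamma S i τ, ∃ k, h z (j k) = c k) :
    ∃ l, MapsTo (fun z => h z l) (Gamma S i τ) (c '' {k | j k = l}) := by
  set Γ := Gamma S i τ
  have : ConnectedSpace Γ := isConnected_iff_connectedSpace.1 hconn
  have : LocallyCompactSpace Γ := (isLocallyClosed_Gamma hS i τ).locallyCompactSpace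
  have hΓS : Γ ⊆ S := Gamma_subset S i τ
  have hcont : ContinuousOn h Γ := hh.continuousOn.mono hΓS
  have hcont_fderiv : ContinuousOn (fderiv ℝ h) Γ :=
    (hh.continuousOn_fderiv_of_isOpen hS le_rfl).mono hΓS
  let F : ι → Set Γ := fun k => {x | h x (j k) = c k}
  let E : Fin d → Set Γ := fun l => {x | ∀ v : Euc d, v i = 0 → fderiv ℝ h x v l = 0}
  have hF : ∀ k, IsClosed (F k) := fun k =>
    isClosed_eq ((EuclideanSpace.proj (j k)).continuous.comp hcont.domRestrict) continuous_const
  have hE : ∀ l, IsClosed (E l) := by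
    intro l
    simp only [E, ofPred_forall]
    exact isClosed_iInter fun v => isClosed_iInter fun _ => isClosed_eq
      ((EuclideanSpace.proj l).continuous.comp
        ((ContinuousLinearMap.apply ℝ (Euc d) v).continuous.comp hcont_fderiv.domRestrict))
      continuous_const
  have hdisj : Pairwise (Disjoint on E) := fun l l' hne =>
    disjoint_left.2 fun x hx hx' => hne <|
      EuclideanSpace.eq_of_forall_coord_eq_zero (A := (fderiv ℝ h x).toLinearMap)
        (hinj x (hΓS x.2)) hx hx'
  have hFE : ∀ k, interior (F k) ⊆ E (j k) := by
    intro k x hx v hv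
    have hloc : ∀ᶠ y in 𝓝[Γ] x, h y (j k) = c k :=
      (eventually_nhds_subtype_iff Γ x _).1 (mem_interior_iff_mem_nhds.1 hx)
    exact fderiv_apply_eq_zero_of_eventually_eq_on_Gamma hS x.2
      ((hh.differentiableOn one_ne_zero).differentiableAt (hS.mem_nhds (hΓS x.2))) hloc hv
  have hFcov : ⋃ k, F k = univ := eq_univ_of_forall fun x => mem_iUnion.2 (hcov x x.2)
  obtain ⟨l, hl⟩ := exists_biUnion_eq_univ_of_interior_subset hF hFcov hE hdisj hFE
  refine ⟨l, fun z hz => ?_⟩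
  obtain ⟨k, hjk, hk⟩ := mem_iUnion₂.1 (hl ▸ mem_univ (⟨z, hz⟩ : Γ))
  exact ⟨k, hjk, hjk ▸ hk.symm⟩

theorem exists_forall_coord_eq_on_Gamma {d : ℕ} {S : Set (Euc d)} (hS : IsOpen S)
    {h : Euc d → Euc d} (hh : ContDiffOn ℝ 1 h S) (hinj : ∀ z ∈ S, Injective (fderiv ℝ h z))
    {i : Fin d} {τ : ℝ} (hconn : IsConnected (Gamma S i τ)) {ι : Type*} [Finite ι]
    (j : ι → Fin d) (c : ι → ℝ) (hcov : ∀ z ∈ Gamma S i τ, ∃ k, h z (j k) = c k) :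
    ∃ k, ∀ z ∈ Gamma S i τ, h z (j k) = c k := by
  obtain ⟨l, hmaps⟩ := exists_coord_mapsTo_image_of_forall_exists_coord_eq hS hh hinj hconn j c hcov
  obtain ⟨z₀, hz₀⟩ := hconn.nonempty
  obtain ⟨k, hjk : j k = l, hk⟩ := hmaps hz₀
  refine ⟨k, fun z hz => ?_⟩
  rw [hjk, hk]
  exact hconn.isPreconnected.constant_of_mapsTo ((Set.toFinite _).image c).isDiscrete
    ((EuclideanSpace.proj l).continuous.comp_continuousOn
      (hh.continuousOn.mono (Gamma_subset S i τ))) hmaps hz hz₀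

theorem exists_image_Gamma_subset_of_subset_sUnion {d : ℕ} {S S' : Set (Euc d)} (hS : IsOpen S)
    {h : Euc d → Euc d} (hh : ContDiffOn ℝ 1 h S) (hinj : ∀ z ∈ S, Injective (fderiv ℝ h z))
    (hmaps : MapsTo h S S') {𝒢' : Set (Set (Euc d))} (h𝒢'fin : 𝒢'.Finite)
    (h𝒢' : ∀ H' ∈ 𝒢', ∃ (j : Fin d) (τ : ℝ), H' = Gamma S' j τ) {i : Fin d} {τ : ℝ}
    (hconn : IsConnected (Gamma S i τ)) (hsub : h '' Gamma S i τ ⊆ ⋃₀ 𝒢') :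
    ∃ H' ∈ 𝒢', h '' Gamma S i τ ⊆ H' := by
  have : Finite 𝒢' := h𝒢'fin.to_subtype
  choose j c hjc using fun H' : 𝒢' => h𝒢' H' H'.2
  have hcov : ∀ z ∈ Gamma S i τ, ∃ H', h z (j H') = c H' := by
    intro z hz
    obtain ⟨H', hH', hzH'⟩ := hsub (mem_image_of_mem h hz)
    rw [show H' = _ from hjc ⟨H', hH'⟩] at hzH'
    exact ⟨⟨H', hH'⟩, hzH'.2⟩
  obtain ⟨H', hH'⟩ := exists_forall_coord_eq_on_Gamma hS hh hinj hconn j c hcov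
  refine ⟨H', H'.2, ?_⟩
  rintro _ ⟨z, hz, rfl⟩
  rw [hjc H']
  exact ⟨hmaps hz.1, hH' z hz⟩

namespace IsSmoothDiffeoOn

variable {d : ℕ} {h hinv : Euc d → Euc d} {S S' : Set (Euc d)}

theorem leftInvOn (hd : IsSmoothDiffeoOn h hinv S S') : LeftInvOn hinv h S :=
  hd.left_inv

theorem symm (hd : IsSmoothDiffeoOn h hinv S S') : IsSmoothDiffeoOn hinv h S' S :=
  ⟨hd.mapsTo_inv, hd.mapsTo, hd.right_inv, hd.left_inv, hd.smooth_inv, hd.smooth⟩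

theorem injective_fderiv (hd : IsSmoothDiffeoOn h hinv S S') (hS : IsOpen S) (hS' : IsOpen S')
    {z : Euc d} (hz : z ∈ S) : Injective (fderiv ℝ h z) := by
  have hh : DifferentiableAt ℝ h z :=
    (hd.smooth.differentiableOn (by simp)).differentiableAt (hS.mem_nhds hz)
  have hinv_diff : DifferentiableAt ℝ hinv (h z) :=
    (hd.smooth_inv.differentiableOn (by simp)).differentiableAt (hS'.mem_nhds (hd.mapsTo hz))
  have hcomp : fderiv ℝ (hinv ∘ h) z = ContinuousLinearMap.id ℝ (Euc d) := by
    have : hinv ∘ h =ᶠ[𝓝 z] id := eventuallyEq_of_mem (hS.mem_nhds hz) hd.left_inv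
    rw [this.fderiv_eq, fderiv_id]
  rw [fderiv_comp z hinv_diff hh] at hcomp
  exact LeftInverse.injective fun v => congr($hcomp v)

theorem image_symm_eq (hd : IsSmoothDiffeoOn h hinv S S') {A B : Set (Euc d)} (hA : A ⊆ S)
    (hAB : h '' A = B) : hinv '' B = A :=
  hAB ▸ (hd.leftInvOn.mono hA).image_image

theorem image_Gamma_mem (hd : IsSmoothDiffeoOn h hinv S S') (hS : IsOpen S) (hS' : IsOpen S')
    {𝒢 𝒢' : Set (Set (Euc d))} (h𝒢fin : 𝒢.Finite) (h𝒢'fin : 𝒢'.Finite)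
    (h𝒢 : ∀ H ∈ 𝒢, ∃ (i : Fin d) (τ : ℝ), H = Gamma S i τ ∧ IsConnected H)
    (h𝒢' : ∀ H' ∈ 𝒢', ∃ (j : Fin d) (τ : ℝ), H' = Gamma S' j τ ∧ IsConnected H')
    (hG : h '' ⋃₀ 𝒢 = ⋃₀ 𝒢') {H : Set (Euc d)} (hH : H ∈ 𝒢) : h '' H ∈ 𝒢' := by
  have hG_sub : ⋃₀ 𝒢 ⊆ S := sUnion_subset fun H hH => by
    obtain ⟨i, τ, rfl, -⟩ := h𝒢 H hH
    exact Gamma_subset S i τ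
  have hinvG : hinv '' ⋃₀ 𝒢' = ⋃₀ 𝒢 := hd.image_symm_eq hG_sub hG
  obtain ⟨i, τ, rfl, hconn⟩ := h𝒢 H hH
  obtain ⟨H', hH', hHH'⟩ := exists_image_Gamma_subset_of_subset_sUnion hS
    (hd.smooth.of_le (by simp)) (fun z hz => hd.injective_fderiv hS hS' hz) hd.mapsTo h𝒢'fin
    (fun H' hH' => (h𝒢' H' hH').imp fun _ => .imp fun _ => And.left) hconn
    (hG ▸ image_mono (subset_sUnion_of_mem hH))
  obtain ⟨j, τ', rfl, hconn'⟩ := h𝒢' H' hH'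
  obtain ⟨H₂, hH₂, hH'H₂⟩ := exists_image_Gamma_subset_of_subset_sUnion hS'
    (hd.smooth_inv.of_le (by simp)) (fun z hz => hd.symm.injective_fderiv hS' hS hz)
    hd.mapsTo_inv h𝒢fin (fun H hH => (h𝒢 H hH).imp fun _ => .imp fun _ => And.left) hconn'
    (hinvG ▸ image_mono (subset_sUnion_of_mem hH'))
  obtain ⟨i₂, τ₂, rfl, -⟩ := h𝒢 H₂ hH₂
  have hΓ_sub : Gamma S i τ ⊆ Gamma S i₂ τ₂ := by
    rw [← (hd.leftInvOn.mono (Gamma_subset S i τ)).image_image]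
    exact (image_mono hHH').trans hH'H₂
  rw [← Gamma_eq_of_subset hS hconn.nonempty hΓ_sub] at hH'H₂
  convert hH' using 1
  refine hHH'.antisymm ?_
  rw [← (hd.symm.leftInvOn.mono (Gamma_subset S' j τ')).image_image]
  exact image_mono hH'H₂

end IsSmoothDiffeoOn

theorem one_to_one_recovery_of_separators_general
    {d : ℕ} {S S' : Set (Euc d)} (hS : IsOpen S) (hS' : IsOpen S')
    {h hinv : Euc d → Euc d} (hdiff : IsSmoothDiffeoOn h hinv S S')
    (𝒢 𝒢' : Set (Set (Euc d))) (h𝒢fin : 𝒢.Finite) (h𝒢'fin : 𝒢'.Finite)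
    (h𝒢 : ∀ H ∈ 𝒢, ∃ (i : Fin d) (τ : ℝ), H = Gamma S i τ ∧ IsAxisSeparator S i τ)
    (h𝒢' : ∀ H' ∈ 𝒢', ∃ (j : Fin d) (τ : ℝ), H' = Gamma S' j τ ∧ IsAxisSeparator S' j τ)
    (hG : h '' (⋃₀ 𝒢) = ⋃₀ 𝒢') :
    (fun H => h '' H) '' 𝒢 = 𝒢' ∧ Set.InjOn (fun H => h '' H) 𝒢 := by
  have h𝒢c : ∀ H ∈ 𝒢, ∃ (i : Fin d) (τ : ℝ), H = Gamma S i τ ∧ IsConnected H :=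
    fun H hH => let ⟨i, τ, hH, hsep⟩ := h𝒢 H hH; ⟨i, τ, hH, hH ▸ hsep.1⟩
  have h𝒢'c : ∀ H' ∈ 𝒢', ∃ (j : Fin d) (τ : ℝ), H' = Gamma S' j τ ∧ IsConnected H' :=
    fun H' hH' => let ⟨j, τ, hH', hsep⟩ := h𝒢' H' hH'; ⟨j, τ, hH', hH' ▸ hsep.1⟩
  have h𝒢_sub : ∀ H ∈ 𝒢, H ⊆ S := fun H hH => by
    obtain ⟨i, τ, rfl, -⟩ := h𝒢 H hH
    exact Gamma_subset S i τ
  have hinvG : hinv '' ⋃₀ 𝒢' = ⋃₀ 𝒢 := hdiff.image_symm_eq (sUnion_subset h𝒢_sub) hG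
  have himage : ∀ H ∈ 𝒢, h '' H ∈ 𝒢' := fun H hH =>
    hdiff.image_Gamma_mem hS hS' h𝒢fin h𝒢'fin h𝒢c h𝒢'c hG hH
  have hinv_image : ∀ H' ∈ 𝒢', hinv '' H' ∈ 𝒢 := fun H' hH' =>
    hdiff.symm.image_Gamma_mem hS' hS h𝒢'fin h𝒢fin h𝒢'c h𝒢c hinvG hH'
  have h𝒢'_sub : ∀ H' ∈ 𝒢', H' ⊆ S' := fun H' hH' => by
    obtain ⟨j, τ, rfl, -⟩ := h𝒢' H' hH'
    exact Gamma_subset S' j τ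
  refine ⟨(image_subset_iff.2 himage).antisymm fun H' hH' => ?_, fun H₁ hH₁ H₂ hH₂ => ?_⟩
  · exact ⟨hinv '' H', hinv_image H' hH', (hdiff.symm.leftInvOn.mono (h𝒢'_sub H' hH')).image_image⟩
  · exact (hdiff.leftInvOn.injOn.image_eq_image_iff (h𝒢_sub H₁ hH₁) (h𝒢_sub H₂ hH₂)).1

/-- **One-to-one recovery of separators (Proposition).** -/
theorem one_to_one_recovery_of_separators
    {d : ℕ} {S S' : Set (Euc d)} (hS : IsOpen S) (hSc : IsConnected S)
    (hS' : IsOpen S') (hS'c : IsConnected S')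
    {h hinv : Euc d → Euc d} (hdiff : IsSmoothDiffeoOn h hinv S S')
    (𝒢 𝒢' : Set (Set (Euc d))) (h𝒢fin : 𝒢.Finite) (h𝒢'fin : 𝒢'.Finite)
    (h𝒢 : ∀ H ∈ 𝒢, ∃ (i : Fin d) (τ : ℝ), H = Gamma S i τ ∧ IsAxisSeparator S i τ)
    (h𝒢' : ∀ H' ∈ 𝒢', ∃ (j : Fin d) (τ : ℝ), H' = Gamma S' j τ ∧ IsAxisSeparator S' j τ)
    (hG : h '' (⋃₀ 𝒢) = ⋃₀ 𝒢') :
    (fun H => h '' H) '' 𝒢 = 𝒢' ∧ Set.InjOn (fun H => h '' H) 𝒢 :=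
  one_to_one_recovery_of_separators_general hS hS' hdiff 𝒢 𝒢' h𝒢fin h𝒢'fin h𝒢 h𝒢' hG
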